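/- Under the same hypotheses (k ≥ 1, 1 ≤ s ≤ 2^{k−1}, ŝ = 2(2s − 1), Y twice continuously differentiable on [0, 2] with |Y''| ≤ H on [0, 2], and Λ_{s,m} = ∫_{(ŝ−2)/2^k}^{(ŝ+2)/2^k} Y(ζ)·2^{k/2}·(1/√(2π))·VL_m(2^kζ − ŝ)·(1/√(4 − (2^kζ − ŝ)²)) dζ), for every m ≥ 2 one has |Λ_{s,m}| ≤ H·√π / (s^{5/2}·(m² − 1)). -/

import Mathlib

open Real MeasureTheory

/-- The Vieta–Lucas polynomials, defined recursively. -/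
noncomputable def VL : ℕ → ℝ → ℝ
  | 0, _ => 2
  | 1, ζ => ζ
  | (m + 2), ζ => ζ * VL (m + 1) ζ - VL m ζ

/-!
The substitution `ζ = (ŝ + 2 cos θ) / 2^k` turns `VL_m(2^k ζ - ŝ) dζ / √(4 - (2^k ζ - ŝ)²)` into
`cos (m θ) dθ`, because `VL_m (2 cos θ) = 2 cos (m θ)`. So `Λ_{s,m}` is a multiple of the cosine
coefficient `∫₀^π Y(a + b cos θ) cos (m θ) dθ`, with `a = ŝ / 2^k` and `b = 2 / 2^k`.
Integrating by parts, using `2 sin θ sin (m θ) = cos ((m-1) θ) - cos ((m+1) θ)` and integrating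
by parts once more bounds this coefficient by `π b² sup |Y''| / (m² - 1)`. The constants then
come to `√π · 2^(-5(k-1)/2)`, and `2^(k-1) ≥ s` finishes the proof.
-/

open Set intervalIntegral

theorem VL_two_mul_cos : ∀ (m : ℕ) (θ : ℝ), VL m (2 * cos θ) = 2 * cos (m * θ)
  | 0, θ => by simp [VL]
  | 1, θ => by simp [VL]
  | m + 2, θ => by
    have hsum : cos ((m + 2) * θ) + cos (m * θ) = 2 * cos θ * cos ((m + 1) * θ) := by
      rw [show ((m : ℝ) + 2) * θ = (m + 1) * θ + θ by ring,
        show (m : ℝ) * θ = (m + 1) * θ - θ by ring, cos_add, cos_sub]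
      ring
    simp only [VL, VL_two_mul_cos (m + 1) θ, VL_two_mul_cos m θ]
    push_cast
    linarith

theorem VL_two_mul_cos_mul_sin_div_sqrt {θ : ℝ} (hθ : θ ∈ Ioo 0 π) (m : ℕ) :
    VL m (2 * cos θ) * (1 / √(4 - (2 * cos θ) ^ 2)) * sin θ = cos (m * θ) := by
  have hsin : 0 < sin θ := sin_pos_of_pos_of_lt_pi hθ.1 hθ.2
  have hsqrt : √(4 - (2 * cos θ) ^ 2) = 2 * sin θ := by
    rw [← sqrt_sq (by positivity : 0 ≤ 2 * sin θ)]
    congr 1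
    nlinarith [sin_sq_add_cos_sq θ]
  rw [VL_two_mul_cos, hsqrt]
  field_simp

theorem integral_neg_one_one_eq_integral_comp_cos_mul_sin (f : ℝ → ℝ) :
    ∫ t in (-1)..1, f t = ∫ θ in 0..π, f (cos θ) * sin θ := by
  have himage : cos '' Ioo 0 π = Ioo (-1) 1 := cosPartialHomeomorph.image_source_eq_target
  rw [integral_of_le (by norm_num), integral_of_le pi_pos.le, integral_Ioc_eq_integral_Ioo,
    integral_Ioc_eq_integral_Ioo, ← himage,
    integral_image_eq_integral_abs_deriv_smul measurableSet_Ioo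
      (fun θ _ => (hasDerivAt_cos θ).hasDerivWithinAt) (injOn_cos.mono Ioo_subset_Icc_self)]
  refine setIntegral_congr_fun measurableSet_Ioo fun θ hθ => ?_
  rw [abs_neg, abs_of_pos (sin_pos_of_pos_of_lt_pi hθ.1 hθ.2), smul_eq_mul, mul_comm]

theorem integral_sub_add_eq_integral_comp_cos_mul_sin (f : ℝ → ℝ) (a : ℝ) {b : ℝ} (hb : b ≠ 0) :
    ∫ x in (a - b)..(a + b), f x = b * ∫ θ in 0..π, f (a + b * cos θ) * sin θ := by
  rw [← integral_neg_one_one_eq_integral_comp_cos_mul_sin fun t => f (a + b * t),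
    integral_comp_add_mul _ hb, smul_eq_mul, mul_inv_cancel_left₀ hb]
  ring_nf

theorem integral_mul_cos_nat_mul {u u' : ℝ → ℝ} (hu : ∀ θ ∈ uIcc 0 π, HasDerivAt u (u' θ) θ)
    (hu' : IntervalIntegrable u' volume 0 π) {n : ℕ} (hn : n ≠ 0) :
    ∫ θ in 0..π, u θ * cos (n * θ) = -(∫ θ in 0..π, u' θ * sin (n * θ)) / n := by
  have hn' : (n : ℝ) ≠ 0 := Nat.cast_ne_zero.mpr hn
  have hv : ∀ θ ∈ uIcc 0 π, HasDerivAt (fun θ => sin (n * θ) / n) (cos (n * θ)) θ := by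
    intro θ _
    simpa [hn'] using (((hasDerivAt_id θ).const_mul (n : ℝ)).sin).div_const (n : ℝ)
  rw [intervalIntegral.integral_mul_deriv_eq_deriv_mul hu hv hu'
    ((by fun_prop : Continuous fun θ : ℝ => cos (n * θ)).intervalIntegrable 0 π)]
  simp only [sin_nat_mul_pi, mul_zero, sin_zero, zero_div, sub_zero, zero_sub, mul_div_assoc']
  rw [intervalIntegral.integral_div, neg_div]

theorem abs_integral_mul_cos_nat_mul_le {u u' : ℝ → ℝ} {B : ℝ}
    (hu : ∀ θ ∈ uIcc 0 π, HasDerivAt u (u' θ) θ) (hu' : IntervalIntegrable u' volume 0 π)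
    (hB : ∀ θ ∈ uIoc 0 π, |u' θ| ≤ B) {n : ℕ} (hn : n ≠ 0) :
    |∫ θ in 0..π, u θ * cos (n * θ)| ≤ π * B / n := by
  rw [integral_mul_cos_nat_mul hu hu' hn, abs_div, abs_neg, Nat.abs_cast]
  gcongr
  have hle := norm_integral_le_of_norm_le_const (a := 0) (b := π)
    (f := fun θ => u' θ * sin (n * θ)) fun θ hθ => by
      rw [norm_mul, norm_eq_abs, norm_eq_abs]
      exact (mul_le_of_le_one_right (abs_nonneg _) (abs_sin_le_one _)).trans (hB θ hθ)
  simpa [abs_of_pos pi_pos, mul_comm] using hle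

theorem hasDerivAt_comp_add_mul_cos {g : ℝ → ℝ} {s : Set ℝ} {a b : ℝ}
    (hg : DifferentiableOn ℝ g s) (hs : ∀ θ, a + b * cos θ ∈ s) (θ : ℝ) :
    HasDerivAt (fun θ => g (a + b * cos θ))
      (-(b * sin θ) * derivWithin g s (a + b * cos θ)) θ := by
  have hinner : HasDerivAt (fun θ => a + b * cos θ) (-(b * sin θ)) θ := by
    simpa using ((hasDerivAt_cos θ).const_mul b).const_add a
  have hcomp := (hg _ (hs θ)).hasDerivWithinAt.scomp_hasDerivAt θ hinner hs
  rwa [smul_eq_mul] at hcomp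

theorem continuous_comp_add_mul_cos {f : ℝ → ℝ} {s : Set ℝ} {a b : ℝ} (hf : ContinuousOn f s)
    (hs : ∀ θ, a + b * cos θ ∈ s) : Continuous fun θ => f (a + b * cos θ) :=
  hf.comp_continuous (by fun_prop) hs

theorem integral_comp_add_mul_cos_mul_cos_eq {g : ℝ → ℝ} {s : Set ℝ} {a b : ℝ}
    (hs : UniqueDiffOn ℝ s) (hg : ContDiffOn ℝ 1 g s) (hmaps : ∀ θ, a + b * cos θ ∈ s)
    {m : ℕ} (hm : 1 ≤ m) :
    ∫ θ in 0..π, g (a + b * cos θ) * cos (m * θ) =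
      b / (2 * m) * ((∫ θ in 0..π, derivWithin g s (a + b * cos θ) * cos ((m - 1 : ℕ) * θ)) -
        ∫ θ in 0..π, derivWithin g s (a + b * cos θ) * cos ((m + 1 : ℕ) * θ)) := by
  have hw := continuous_comp_add_mul_cos (hg.continuousOn_derivWithin hs le_rfl) hmaps
  have hw_int (n : ℕ) : IntervalIntegrable
      (fun θ => derivWithin g s (a + b * cos θ) * cos (n * θ)) volume 0 π :=
    (hw.mul (by fun_prop)).intervalIntegrable 0 π
  rw [integral_mul_cos_nat_mul
      (fun θ _ => hasDerivAt_comp_add_mul_cos (hg.differentiableOn one_ne_zero) hmaps θ)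
      (((by fun_prop : Continuous fun θ => -(b * sin θ)).mul hw).intervalIntegrable 0 π)
      (by omega),
    ← integral_sub (hw_int _) (hw_int _), ← intervalIntegral.integral_const_mul,
    neg_div, ← intervalIntegral.integral_div, ← intervalIntegral.integral_neg]
  refine integral_congr fun θ _ => ?_
  -- `2 sin θ sin (mθ) = cos ((m - 1)θ) - cos ((m + 1)θ)`
  simp only [Nat.cast_sub hm, Nat.cast_add, Nat.cast_one, sub_mul, add_mul, one_mul, cos_sub,
    cos_add]
  field_simp
  ring

theorem abs_integral_comp_add_mul_cos_mul_cos_le {g : ℝ → ℝ} {s : Set ℝ} {a b M : ℝ}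
    (hs : UniqueDiffOn ℝ s) (hg : ContDiffOn ℝ 2 g s)
    (hM : ∀ x ∈ s, |iteratedDerivWithin 2 g s x| ≤ M) (hmaps : ∀ θ, a + b * cos θ ∈ s)
    {m : ℕ} (hm : 2 ≤ m) :
    |∫ θ in 0..π, g (a + b * cos θ) * cos (m * θ)| ≤ π * b ^ 2 * M / (m ^ 2 - 1) := by
  set g₁ := derivWithin g s
  have hg₁ : ContDiffOn ℝ 1 g₁ s := hg.derivWithin hs (by norm_num)
  have hg₂ : ∀ x ∈ s, |derivWithin g₁ s x| ≤ M := fun x hx => by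
    simpa [iteratedDerivWithin_succ', iteratedDerivWithin_one] using hM x hx
  have hcos_bound (n : ℕ) (hn : n ≠ 0) :
      |∫ θ in 0..π, g₁ (a + b * cos θ) * cos (n * θ)| ≤ π * (|b| * M) / n := by
    refine abs_integral_mul_cos_nat_mul_le
      (fun θ _ => hasDerivAt_comp_add_mul_cos (hg₁.differentiableOn one_ne_zero) hmaps θ)
      (((by fun_prop : Continuous fun θ => -(b * sin θ)).mul (continuous_comp_add_mul_cos
        (hg₁.continuousOn_derivWithin hs le_rfl) hmaps)).intervalIntegrable 0 π)
      (fun θ _ => ?_) hn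
    rw [abs_mul, abs_neg, abs_mul]
    exact mul_le_mul (mul_le_of_le_one_right (abs_nonneg b) (abs_sin_le_one θ))
      (hg₂ _ (hmaps θ)) (abs_nonneg _) (abs_nonneg b)
  have hm' : (2 : ℝ) ≤ m := by exact_mod_cast hm
  have hm1 : ((m - 1 : ℕ) : ℝ) = m - 1 := by rw [Nat.cast_sub (by omega), Nat.cast_one]
  have hsum := (abs_sub _ _).trans
    (add_le_add (hcos_bound (m - 1) (by omega)) (hcos_bound (m + 1) (by omega)))
  rw [hm1, Nat.cast_add, Nat.cast_one] at hsum
  calc |∫ θ in 0..π, g (a + b * cos θ) * cos (m * θ)|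
      ≤ |b| / (2 * m) * (π * (|b| * M) / (m - 1) + π * (|b| * M) / (m + 1)) := by
        rw [integral_comp_add_mul_cos_mul_cos_eq hs (hg.of_le (by norm_num)) hmaps (by omega),
          hm1, Nat.cast_add, Nat.cast_one, abs_mul, abs_div,
          abs_of_pos (by positivity : (0 : ℝ) < 2 * m)]
        exact mul_le_mul_of_nonneg_left hsum (by positivity)
    _ = π * b ^ 2 * M / (m ^ 2 - 1) := by
        have hm_sub : (m : ℝ) - 1 ≠ 0 := by linarith
        have hm_add : (m : ℝ) + 1 ≠ 0 := by linarith
        have hm_sq : (m : ℝ) ^ 2 - 1 ≠ 0 := by nlinarith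
        rw [← sq_abs b]
        field_simp
        ring

theorem integral_mul_VL_div_sqrt_eq_integral_mul_cos (f : ℝ → ℝ) (m : ℕ) {L : ℝ} (hL : 0 < L)
    (t : ℝ) :
    ∫ ζ in ((t - 2) / L)..((t + 2) / L), f ζ * VL m (L * ζ - t) * (1 / √(4 - (L * ζ - t) ^ 2)) =
      2 / L * ∫ θ in 0..π, f (t / L + 2 / L * cos θ) * cos (m * θ) := by
  rw [show (t - 2) / L = t / L - 2 / L by ring, show (t + 2) / L = t / L + 2 / L by ring,
    integral_sub_add_eq_integral_comp_cos_mul_sin _ _ (by positivity)]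
  congr 1
  -- the weight `1 / √(4 - ·²)` is singular only at the endpoints `θ = 0, π`
  refine integral_congr_ae ?_
  filter_upwards [Measure.ae_ne volume π] with θ hθπ hθ
  rw [uIoc_of_le pi_pos.le] at hθ
  have harg : L * (t / L + 2 / L * cos θ) - t = 2 * cos θ := by field_simp; ring
  rw [harg, ← VL_two_mul_cos_mul_sin_div_sqrt ⟨hθ.1, hθ.2.lt_of_ne hθπ⟩ m]
  ring

theorem two_div_pow_three_mul_sqrt_div_sqrt_two_mul_pi_mul_pi_le {s L : ℝ} (hs : 0 < s)
    (hsL : 2 * s ≤ L) :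
    (2 / L) ^ 3 * √L / √(2 * π) * π ≤ √π / s ^ ((5 : ℝ) / 2) := by
  obtain ⟨K, rfl⟩ : ∃ K, L = 2 * K := ⟨L / 2, by ring⟩
  have hK : 0 < K := by linarith
  have hK_pow : K ^ 3 = K ^ ((5 : ℝ) / 2) * √K := by
    rw [sqrt_eq_rpow, ← rpow_add hK, ← rpow_natCast]
    norm_num
  calc (2 / (2 * K)) ^ 3 * √(2 * K) / √(2 * π) * π = √π / K ^ ((5 : ℝ) / 2) := by
        rw [sqrt_mul zero_le_two, sqrt_mul zero_le_two, div_mul_cancel_left₀ two_ne_zero,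
          inv_pow, hK_pow]
        field_simp
        exact (sq_sqrt pi_pos.le).symm
    _ ≤ √π / s ^ ((5 : ℝ) / 2) := by gcongr; linarith

theorem vieta_lucas_wavelet_coefficient_bound_s
    (k s : ℕ) (hk : 1 ≤ k) (hs1 : 1 ≤ s) (hs2 : s ≤ 2 ^ (k - 1))
    (Y : ℝ → ℝ) (H : ℝ) (hH : 0 ≤ H)
    (hY : ContDiffOn ℝ 2 Y (Set.Icc (0 : ℝ) 2))
    (hY'' : ∀ ζ ∈ Set.Icc (0 : ℝ) 2,
      |iteratedDerivWithin 2 Y (Set.Icc (0 : ℝ) 2) ζ| ≤ H)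
    (sh : ℝ) (hsh : sh = 2 * (2 * (s : ℝ) - 1))
    (Λ : ℕ → ℝ)
    (hΛ : ∀ m : ℕ, Λ m =
      ∫ ζ in ((sh - 2) / 2 ^ k)..((sh + 2) / 2 ^ k),
        Y ζ * 2 ^ ((k : ℝ) / 2) * (1 / Real.sqrt (2 * π)) *
          VL m (2 ^ k * ζ - sh) * (1 / Real.sqrt (4 - (2 ^ k * ζ - sh) ^ 2))) :
    ∀ m : ℕ, 2 ≤ m →
      |Λ m| ≤ H * Real.sqrt π / ((s : ℝ) ^ ((5 : ℝ) / 2) * ((m : ℝ) ^ 2 - 1)) := by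
  intro m hm
  set L : ℝ := 2 ^ k with hL_def
  have hL : 0 < L := by positivity
  have hsL : 2 * (s : ℝ) ≤ L := by
    rw [hL_def, ← Nat.sub_add_cancel hk, pow_succ']
    exact_mod_cast Nat.mul_le_mul_left 2 hs2
  have hs : (1 : ℝ) ≤ s := by exact_mod_cast hs1
  have hm' : (0 : ℝ) < (m : ℝ) ^ 2 - 1 := by
    have : (2 : ℝ) ≤ m := by exact_mod_cast hm
    nlinarith
  have hmaps (θ : ℝ) : sh / L + 2 / L * cos θ ∈ Icc (0 : ℝ) 2 := by
    rw [show sh / L + 2 / L * cos θ = (sh + 2 * cos θ) / L by ring, mem_Icc, le_div_iff₀ hL,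
      div_le_iff₀ hL]
    constructor <;> linarith [neg_one_le_cos θ, cos_le_one θ]
  have hrpow : (2 : ℝ) ^ ((k : ℝ) / 2) = √L := by
    rw [sqrt_eq_rpow, hL_def, ← rpow_natCast, ← rpow_mul zero_le_two]
    ring_nf
  have hΛm : Λ m = 2 / L * (√L * (1 / √(2 * π))) *
      ∫ θ in 0..π, Y (sh / L + 2 / L * cos θ) * cos (m * θ) := by
    rw [hΛ m, hrpow, integral_mul_VL_div_sqrt_eq_integral_mul_cos _ m hL, mul_assoc,
      ← intervalIntegral.integral_const_mul (√L * (1 / √(2 * π)))]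
    congr 1
    exact integral_congr fun θ _ => by ring
  calc |Λ m| = 2 / L * (√L * (1 / √(2 * π))) *
        |∫ θ in 0..π, Y (sh / L + 2 / L * cos θ) * cos (m * θ)| := by
        rw [hΛm, abs_mul, abs_of_pos (by positivity)]
    _ ≤ 2 / L * (√L * (1 / √(2 * π))) * (π * (2 / L) ^ 2 * H / (m ^ 2 - 1)) := by
        gcongr
        exact abs_integral_comp_add_mul_cos_mul_cos_le (uniqueDiffOn_Icc two_pos) hY hY''
          hmaps hm
    _ = (2 / L) ^ 3 * √L / √(2 * π) * π * (H / (m ^ 2 - 1)) := by ring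
    _ ≤ √π / s ^ ((5 : ℝ) / 2) * (H / (m ^ 2 - 1)) := by
        gcongr
        exact two_div_pow_three_mul_sqrt_div_sqrt_two_mul_pi_mul_pi_le (by positivity) hsL
    _ = H * √π / (s ^ ((5 : ℝ) / 2) * (m ^ 2 - 1)) := by rw [div_mul_div_comm, mul_comm √π]
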